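/- arXiv:2402.05533 — 3 statements merged into one kernel-verified Lean document; each statement's English description precedes it below -/
import Mathlib

section
/- Let $z:(x_1,x_2)\to(0,\infty)$ be a maximal solution of $z''/(1+z'^2) = -2/z$ attaining a maximum $z_0$ at an interior point. Then the interval $(x_1,x_2)$ is bounded and $z(x)\to 0$ as $x \to x_1^+$ and as $x \to x_2^-$, with $|z'(x)| \to \infty$ at both endpoints (the graph meets the $x$-axis orthogonally). -/
open Set Filter

/-- `z` is a positive solution of `z''/(1+z'^2) = -2/z` on the open order-connected set `s`. -/
def IsSolOn (s : Set ℝ) (z : ℝ → ℝ) : Prop :=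
  IsOpen s ∧ s.OrdConnected ∧
  (∀ x ∈ s, 0 < z x) ∧
  (∀ x ∈ s, DifferentiableAt ℝ z x) ∧
  (∀ x ∈ s, DifferentiableAt ℝ (deriv z) x) ∧
  (∀ x ∈ s, deriv (deriv z) x / (1 + (deriv z x) ^ 2) = -2 / z x)

/-- A maximal solution: it admits no extension to a strictly larger open interval. -/
def IsMaxSolOn (s : Set ℝ) (z : ℝ → ℝ) : Prop :=
  IsSolOn s z ∧ ∀ t : Set ℝ, ∀ w : ℝ → ℝ, IsSolOn t w → s ⊆ t → Set.EqOn w z s → t = s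

/-!
Since `z'' = -2 (1 + z'^2) / z`, the quantity `(1 + z'^2) z^4` is a first integral, so
`1 + z'^2 = (z₀ / z)^4`. As `z ≤ z₀` we get `z'' ≤ -2 / z₀`, hence `z x ≤ z₀ - (x - x₀)^2 / z₀`
and the interval has length at most `2 z₀`. Right of `x₀` the solution decreases to a limit
`L ≥ 0`. If `L > 0`, then `(z, z')` converges to a point of the half-plane `z > 0` where the
equivalent planar system is smooth, and Picard–Lindelöf continues the solution past the endpoint,
contradicting maximality. So `L = 0` and `|z'| = √((z₀ / z)^4 - 1) → ∞`. The left endpoint is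
the right endpoint of the reflected solution `x ↦ z (-x)`.
-/

open Topology Pointwise

noncomputable def odeField (p : ℝ × ℝ) : ℝ × ℝ := (p.2, -2 * (1 + p.2 ^ 2) / p.1)

theorem contDiffAt_odeField {p : ℝ × ℝ} (hp : p.1 ≠ 0) : ContDiffAt ℝ 1 odeField p :=
  contDiffAt_snd.prodMk <|
    (contDiffAt_const.mul (contDiffAt_const.add (contDiffAt_snd.pow 2))).div contDiffAt_fst hp

theorem add_mul_sq_le_of_deriv_deriv_le {s : Set ℝ} {f : ℝ → ℝ} {c x₀ : ℝ} (hs : IsOpen s)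
    (hs' : Convex ℝ s) (hf : ∀ x ∈ s, DifferentiableAt ℝ f x)
    (hf' : ∀ x ∈ s, DifferentiableAt ℝ (deriv f) x) (hf'' : ∀ x ∈ s, deriv (deriv f) x ≤ -c)
    (hx₀ : x₀ ∈ s) (hd : deriv f x₀ = 0) {x : ℝ} (hx : x ∈ s) :
    f x + c / 2 * (x - x₀) ^ 2 ≤ f x₀ := by
  set g : ℝ → ℝ := fun x => f x + c / 2 * (x - x₀) ^ 2
  have hg : ∀ x ∈ s, HasDerivAt g (deriv f x + c * (x - x₀)) x := fun x hx =>
    ((hf x hx).hasDerivAt.add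
      ((((hasDerivAt_id x).sub_const x₀).pow 2).const_mul (c / 2))).congr_deriv (by simp; ring)
  have hg' : ∀ x ∈ s, HasDerivAt (fun x => deriv f x + c * (x - x₀)) (deriv (deriv f) x + c) x :=
    fun x hx => ((hf' x hx).hasDerivAt.add
      (((hasDerivAt_id x).sub_const x₀).const_mul c)).congr_deriv (by simp)
  have hanti : AntitoneOn (deriv g) s := by
    refine (antitoneOn_of_deriv_nonpos hs' (fun x hx => (hg' x hx).continuousAt.continuousWithinAt)
      (fun x hx => (hg' x (interior_subset hx)).differentiableAt.differentiableWithinAt)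
      fun x hx => ?_).congr fun x hx => (hg x hx).deriv.symm
    rw [(hg' x (interior_subset hx)).deriv]
    linarith [hf'' x (interior_subset hx)]
  have hconcave : ConcaveOn ℝ s g := (hanti.mono interior_subset).concaveOn_of_deriv hs'
    (fun x hx => (hg x hx).continuousAt.continuousWithinAt)
    (fun x hx => (hg x (interior_subset hx)).differentiableAt.differentiableWithinAt)
  have hmin := hconcave.neg.isMinOn_of_rightDeriv_eq_zero (hs.interior_eq.symm ▸ hx₀) <| by
    rw [((hg x₀ hx₀).neg.hasDerivWithinAt).derivWithin (uniqueDiffWithinAt_Ioi x₀), hd]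
    simp
  simpa [g] using hmin hx

theorem IsOpen.eq_Ioo_csInf_csSup {s : Set ℝ} (hs : IsOpen s) (hc : s.OrdConnected)
    (hne : s.Nonempty) (hb : BddBelow s) (ha : BddAbove s) : s = Ioo (sInf s) (sSup s) := by
  refine Subset.antisymm (fun x hx => ⟨?_, ?_⟩)
    (IsConnected.Ioo_csInf_csSup_subset ⟨hne, hc.isPreconnected⟩ hb ha)
  · obtain ⟨l, hl, hls⟩ := exists_Ioc_subset_of_mem_nhds (hs.mem_nhds hx) ⟨x - 1, by linarith⟩
    obtain ⟨y, hly, hyx⟩ := exists_between hl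
    exact (csInf_le hb (hls ⟨hly, hyx.le⟩)).trans_lt hyx
  · obtain ⟨u, hu, hus⟩ := exists_Ico_subset_of_mem_nhds (hs.mem_nhds hx) ⟨x + 1, by linarith⟩
    obtain ⟨y, hxy, hyu⟩ := exists_between hu
    exact hxy.trans_le (le_csSup ha (hus ⟨hxy.le, hyu⟩))

theorem exists_hasDerivAt_extension {E : Type*} [NormedAddCommGroup E] [NormedSpace ℝ E]
    [CompleteSpace E] {F : E → E} {Z : ℝ → E} {a b : ℝ} {p : E} (hF : ContDiffAt ℝ 1 F p)
    (hab : a < b) (hZ : ∀ t ∈ Ioo a b, HasDerivAt Z (F (Z t)) t)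
    (hlim : Tendsto Z (𝓝[<] b) (𝓝 p)) :
    ∃ W : ℝ → E, ∃ ε > 0, EqOn W Z (Iio b) ∧ W b = p ∧
      ∀ t ∈ Ioo a (b + ε), HasDerivAt W (F (W t)) t := by
  obtain ⟨g, hgb, ε, hε, hg⟩ :=
    hF.exists_forall_mem_closedBall_exists_eq_forall_mem_Ioo_hasDerivAt₀ b
  set W : ℝ → E := fun t => if t < b then Z t else g t
  have hWZ : EqOn W Z (Iio b) := fun t ht => if_pos ht
  have hWg : EqOn W g (Ici b) := fun t ht => if_neg (not_lt.2 ht)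
  have hWb : W b = p := (hWg self_mem_Ici).trans hgb
  have hleft : ∀ t ∈ Ioo a b, HasDerivAt W (F (Z t)) t := fun t ht =>
    (hZ t ht).congr_of_eventuallyEq (eventually_of_mem (Iio_mem_nhds ht.2) hWZ)
  refine ⟨W, ε, hε, hWZ, hWb, fun t ht => ?_⟩
  rcases lt_trichotomy t b with htb | rfl | hbt
  · rw [hWZ htb]
    exact hleft t ⟨ht.1, htb⟩
  · -- at the junction the left derivative exists because `Z' = F ∘ Z → F p`
    have hIic : HasDerivWithinAt W (F p) (Iic t) t := by
      refine hasDerivWithinAt_Iic_of_tendsto_deriv (s := Ioo a t)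
        (fun u hu => (hleft u hu).differentiableAt.differentiableWithinAt) ?_
        (Ioo_mem_nhdsLT hab) ?_
      · rw [ContinuousWithinAt, hWb]
        exact (hlim.mono_left (nhdsWithin_mono _ Ioo_subset_Iio_self)).congr'
          (eventually_nhdsWithin_of_forall fun u hu => (hWZ hu.2).symm)
      · refine (hF.continuousAt.tendsto.comp hlim).congr' ?_
        filter_upwards [Ioo_mem_nhdsLT hab] with u hu using (hleft u hu).deriv.symm
    have hIci : HasDerivWithinAt W (F p) (Ici t) t := by
      rw [← hgb]
      exact (hg t ⟨by linarith, by linarith⟩).hasDerivWithinAt.congr hWg (hWg self_mem_Ici)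
    rw [hWb, ← hasDerivWithinAt_univ, ← Iic_union_Ici]
    exact hIic.union hIci
  · rw [hWg hbt.le]
    exact (hg t ⟨by linarith, ht.2⟩).congr_of_eventuallyEq
      (eventually_of_mem (Ioi_mem_nhds hbt) fun u hu => hWg (mem_Ici.2 (le_of_lt hu)))

theorem isSolOn_fst_of_hasDerivAt {s : Set ℝ} {W : ℝ → ℝ × ℝ} (hs : IsOpen s)
    (hs' : s.OrdConnected) (hpos : ∀ x ∈ s, 0 < (W x).1)
    (hW : ∀ x ∈ s, HasDerivAt W (odeField (W x)) x) : IsSolOn s (fun x => (W x).1) := by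
  have hfst : ∀ x ∈ s, HasDerivAt (fun y => (W y).1) (W x).2 x := fun x hx =>
    (hasFDerivAt_fst.comp_hasDerivAt x (hW x hx) :)
  have hsnd : ∀ x ∈ s, HasDerivAt (fun y => (W y).2) (-2 * (1 + (W x).2 ^ 2) / (W x).1) x :=
    fun x hx => (hasFDerivAt_snd.comp_hasDerivAt x (hW x hx) :)
  have hderiv : ∀ x ∈ s, deriv (fun y => (W y).1) =ᶠ[𝓝 x] fun y => (W y).2 := fun x hx =>
    eventually_of_mem (hs.mem_nhds hx) fun y hy => (hfst y hy).deriv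
  refine ⟨hs, hs', hpos, fun x hx => (hfst x hx).differentiableAt,
    fun x hx => ((hsnd x hx).congr_of_eventuallyEq (hderiv x hx)).differentiableAt,
    fun x hx => ?_⟩
  rw [((hsnd x hx).congr_of_eventuallyEq (hderiv x hx)).deriv, (hfst x hx).deriv]
  field_simp [(hpos x hx).ne']

namespace IsSolOn

variable {s : Set ℝ} {z : ℝ → ℝ} {x y x₀ : ℝ}

theorem isOpen (hz : IsSolOn s z) : IsOpen s := hz.1

theorem ordConnected (hz : IsSolOn s z) : s.OrdConnected := hz.2.1

theorem pos (hz : IsSolOn s z) (hx : x ∈ s) : 0 < z x := hz.2.2.1 x hx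

theorem differentiableAt (hz : IsSolOn s z) (hx : x ∈ s) : DifferentiableAt ℝ z x :=
  hz.2.2.2.1 x hx

theorem differentiableAt_deriv (hz : IsSolOn s z) (hx : x ∈ s) :
    DifferentiableAt ℝ (deriv z) x :=
  hz.2.2.2.2.1 x hx

theorem deriv_deriv_eq (hz : IsSolOn s z) (hx : x ∈ s) :
    deriv (deriv z) x = -2 * (1 + deriv z x ^ 2) / z x := by
  have h := hz.2.2.2.2.2 x hx
  rw [div_eq_iff (by positivity)] at h
  rw [h, div_mul_eq_mul_div]

theorem hasDerivAt_odeField (hz : IsSolOn s z) (hx : x ∈ s) :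
    HasDerivAt (fun y => (z y, deriv z y)) (odeField (z x, deriv z x)) x := by
  rw [odeField, ← hz.deriv_deriv_eq hx]
  exact (hz.differentiableAt hx).hasDerivAt.prodMk (hz.differentiableAt_deriv hx).hasDerivAt

theorem comp_neg (hz : IsSolOn s z) : IsSolOn (-s) (fun x => z (-x)) := by
  refine isSolOn_fst_of_hasDerivAt (W := fun x => (z (-x), -deriv z (-x)))
    (hz.isOpen.preimage continuous_neg)
    ⟨fun a ha b hb c hc => hz.ordConnected.out hb ha ⟨neg_le_neg hc.2, neg_le_neg hc.1⟩⟩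
    (fun x hx => hz.pos hx) fun x hx => ?_
  have h1 : HasDerivAt (fun y => z (-y)) (-deriv z (-x)) x := by
    simpa [Function.comp_def] using (hz.differentiableAt hx).hasDerivAt.comp x (hasDerivAt_neg x)
  have h2 := ((hz.differentiableAt_deriv hx).hasDerivAt.comp x (hasDerivAt_neg x)).neg
  rw [mul_neg_one, neg_neg] at h2
  rw [odeField, neg_sq, ← hz.deriv_deriv_eq hx]
  exact h1.prodMk h2

theorem first_integral (hz : IsSolOn s z) (hx : x ∈ s) (hy : y ∈ s) :
    (1 + deriv z x ^ 2) * z x ^ 4 = (1 + deriv z y ^ 2) * z y ^ 4 := by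
  have hE : ∀ x ∈ s, HasDerivAt (fun x => (1 + deriv z x ^ 2) * z x ^ 4) 0 x := by
    intro x hx
    refine ((((hz.differentiableAt_deriv hx).hasDerivAt.pow 2).const_add 1).mul
      ((hz.differentiableAt hx).hasDerivAt.pow 4)).congr_deriv ?_
    rw [hz.deriv_deriv_eq hx, Pi.pow_apply, Pi.pow_apply]
    field_simp [(hz.pos hx).ne']
    ring
  exact hz.isOpen.is_const_of_deriv_eq_zero hz.ordConnected.isPreconnected
    (fun x hx => (hE x hx).differentiableAt.differentiableWithinAt) (fun x hx => (hE x hx).deriv)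
    hx hy

theorem deriv_eq_zero_of_isMaxOn (hz : IsSolOn s z) (hx₀ : x₀ ∈ s) (hmax : IsMaxOn z s x₀) :
    deriv z x₀ = 0 :=
  (hmax.isLocalMax (hz.isOpen.mem_nhds hx₀)).deriv_eq_zero

theorem one_add_deriv_sq (hz : IsSolOn s z) (hx₀ : x₀ ∈ s) (hmax : IsMaxOn z s x₀) (hx : x ∈ s) :
    1 + deriv z x ^ 2 = (z x₀ / z x) ^ 4 := by
  have h := hz.first_integral hx hx₀
  rw [hz.deriv_eq_zero_of_isMaxOn hx₀ hmax] at h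
  rw [div_pow, eq_div_iff (by have := hz.pos hx; positivity)]
  linarith

theorem abs_sub_lt_of_isMaxOn (hz : IsSolOn s z) (hx₀ : x₀ ∈ s) (hmax : IsMaxOn z s x₀)
    (hx : x ∈ s) : |x - x₀| < z x₀ := by
  have hz₀ : 0 < z x₀ := hz.pos hx₀
  have hconcave : ∀ y ∈ s, deriv (deriv z) y ≤ -(2 / z x₀) := fun y hy => by
    rw [hz.deriv_deriv_eq hy, neg_div', div_le_div_iff₀ (hz.pos hy) hz₀]
    nlinarith [sq_nonneg (deriv z y), isMaxOn_iff.1 hmax y hy]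
  have h := add_mul_sq_le_of_deriv_deriv_le hz.isOpen hz.ordConnected.convex
    (fun y hy => hz.differentiableAt hy) (fun y hy => hz.differentiableAt_deriv hy) hconcave hx₀
    (hz.deriv_eq_zero_of_isMaxOn hx₀ hmax) hx
  refine abs_lt_of_sq_lt_sq ?_ hz₀.le
  have hq : (x - x₀) ^ 2 = z x₀ * (2 / z x₀ / 2 * (x - x₀) ^ 2) := by field_simp
  nlinarith [hz.pos hx]

theorem eq_Ioo_of_isMaxOn (hz : IsSolOn s z) (hx₀ : x₀ ∈ s) (hmax : IsMaxOn z s x₀) :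
    s = Ioo (sInf s) (sSup s) :=
  hz.isOpen.eq_Ioo_csInf_csSup hz.ordConnected ⟨x₀, hx₀⟩
    ⟨x₀ - z x₀, fun x hx => by linarith [(abs_lt.1 (hz.abs_sub_lt_of_isMaxOn hx₀ hmax hx)).1]⟩
    ⟨x₀ + z x₀, fun x hx => by linarith [(abs_lt.1 (hz.abs_sub_lt_of_isMaxOn hx₀ hmax hx)).2]⟩

theorem deriv_neg_of_isMaxOn (hz : IsSolOn s z) (hx₀ : x₀ ∈ s) (hmax : IsMaxOn z s x₀)
    (hx : x ∈ s) (hlt : x₀ < x) : deriv z x < 0 := by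
  have hanti : StrictAntiOn (deriv z) s :=
    strictAntiOn_of_deriv_neg hz.ordConnected.convex
      (fun y hy => (hz.differentiableAt_deriv hy).continuousAt.continuousWithinAt) fun y hy => by
        have hy := interior_subset hy
        rw [hz.deriv_deriv_eq hy]
        exact div_neg_of_neg_of_pos (by nlinarith [sq_nonneg (deriv z y)]) (hz.pos hy)
  simpa [hz.deriv_eq_zero_of_isMaxOn hx₀ hmax] using hanti hx₀ hx hlt

end IsSolOn

namespace IsMaxSolOn

variable {s : Set ℝ} {z : ℝ → ℝ} {a b x₀ : ℝ}

theorem comp_neg (hz : IsMaxSolOn s z) : IsMaxSolOn (-s) (fun x => z (-x)) := by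
  refine ⟨hz.1.comp_neg, fun t w hw hst hwz => ?_⟩
  have h := hz.2 (-t) (fun x => w (-x)) hw.comp_neg (fun x hx => hst (by simpa using hx))
    fun x hx => by simpa using hwz (x := -x) (by simpa using hx)
  rw [← neg_neg t, h]

theorem not_tendsto_of_pos {L m : ℝ} (hz : IsMaxSolOn s z) (hs : s = Ioo a b) (hab : a < b)
    (hL : 0 < L) (hlim : Tendsto (fun x => (z x, deriv z x)) (𝓝[<] b) (𝓝 (L, m))) : False := by
  obtain ⟨W, ε, hε, hWZ, hWb, hW⟩ := exists_hasDerivAt_extension (contDiffAt_odeField hL.ne') hab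
    (fun t ht => hz.1.hasDerivAt_odeField (hs ▸ ht)) hlim
  have hpos : ∀ᶠ t in 𝓝 b, 0 < (W t).1 :=
    (continuousAt_fst.comp (hW b ⟨hab, by linarith⟩).continuousAt).eventually_const_lt
      (by simpa [hWb] using hL)
  obtain ⟨u, hbu, hu⟩ := exists_Ico_subset_of_mem_nhds hpos ⟨b + 1, by linarith⟩
  set c := min u (b + ε)
  have hbc : b < c := lt_min hbu (by linarith)
  have hsol : IsSolOn (Ioo a c) (fun t => (W t).1) := by
    refine isSolOn_fst_of_hasDerivAt isOpen_Ioo ordConnected_Ioo (fun t ht => ?_)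
      fun t ht => hW t ⟨ht.1, ht.2.trans_le (min_le_right _ _)⟩
    rcases lt_or_ge t b with htb | hbt
    · rw [hWZ htb]
      exact hz.1.pos (hs ▸ ⟨ht.1, htb⟩)
    · exact hu ⟨hbt, ht.2.trans_le (min_le_left _ _)⟩
  have hext := hz.2 _ _ hsol (hs ▸ Ioo_subset_Ioo_right hbc.le)
    fun t ht => congrArg Prod.fst (hWZ (hs ▸ ht).2)
  have hb : b ∈ Ioo a c := ⟨hab, hbc⟩
  rw [hext, hs] at hb
  exact lt_irrefl b hb.2

theorem tendsto_nhdsLT (hz : IsMaxSolOn s z) (hs : s = Ioo a b) (hx₀ : x₀ ∈ s)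
    (hmax : IsMaxOn z s x₀) :
    Tendsto z (𝓝[<] b) (𝓝 0) ∧ Tendsto (fun x => |deriv z x|) (𝓝[<] b) atTop := by
  have hx₀' : x₀ ∈ Ioo a b := hs ▸ hx₀
  have hsub : Ioo x₀ b ⊆ s := hs ▸ Ioo_subset_Ioo_left hx₀'.1.le
  have hpos : ∀ x ∈ Ioo x₀ b, 0 < z x := fun x hx => hz.1.pos (hsub hx)
  have hderiv_neg : ∀ x ∈ Ioo x₀ b, deriv z x < 0 := fun x hx =>
    hz.1.deriv_neg_of_isMaxOn hx₀ hmax (hsub hx) hx.1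
  have hderiv : ∀ x ∈ Ioo x₀ b, deriv z x = -√((z x₀ / z x) ^ 4 - 1) := fun x hx => by
    rw [← hz.1.one_add_deriv_sq hx₀ hmax (hsub hx), add_sub_cancel_left, Real.sqrt_sq_eq_abs,
      abs_of_neg (hderiv_neg x hx), neg_neg]
  have hanti : AntitoneOn z (Ioo x₀ b) :=
    antitoneOn_of_deriv_nonpos (convex_Ioo x₀ b)
      (fun x hx => (hz.1.differentiableAt (hsub hx)).continuousAt.continuousWithinAt)
      (fun x hx => (hz.1.differentiableAt (hsub (interior_subset hx))).differentiableWithinAt)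
      fun x hx => (hderiv_neg x (interior_subset hx)).le
  have hbdd : BddBelow (z '' Ioo x₀ b) := ⟨0, by rintro _ ⟨x, hx, rfl⟩; exact (hpos x hx).le⟩
  have hne : (Ioo x₀ b).Nonempty := nonempty_Ioo.2 hx₀'.2
  have hlim := hanti.tendsto_nhdsWithin_Ioo_left hne hbdd
  set L := sInf (z '' Ioo x₀ b)
  have hL0 : 0 ≤ L := le_csInf (hne.image z) (by rintro _ ⟨x, hx, rfl⟩; exact (hpos x hx).le)
  have hL : L = 0 := by
    by_contra hL'
    have hL : 0 < L := lt_of_le_of_ne hL0 (Ne.symm hL')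
    have hcont : ContinuousAt (fun y => -√((z x₀ / y) ^ 4 - 1)) L := by
      fun_prop (disch := exact hL.ne')
    refine hz.not_tendsto_of_pos hs (hx₀'.1.trans hx₀'.2) hL
      (hlim.prodMk_nhds ((hcont.tendsto.comp hlim).congr' ?_))
    filter_upwards [Ioo_mem_nhdsLT hx₀'.2] with x hx using (hderiv x hx).symm
  rw [hL] at hlim
  refine ⟨hlim, ?_⟩
  have hzpos : Tendsto z (𝓝[<] b) (𝓝[>] 0) :=
    tendsto_nhdsWithin_iff.2 ⟨hlim, eventually_of_mem (Ioo_mem_nhdsLT hx₀'.2) hpos⟩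
  have hquot : Tendsto (fun x => z x₀ / z x) (𝓝[<] b) atTop := by
    simpa only [div_eq_mul_inv, Pi.inv_apply] using
      hzpos.inv_tendsto_nhdsGT_zero.const_mul_atTop (hz.1.pos hx₀)
  refine (Real.tendsto_sqrt_atTop.comp (tendsto_atTop_add_const_right _ (-1)
    ((tendsto_pow_atTop four_ne_zero).comp hquot))).congr' ?_
  filter_upwards [Ioo_mem_nhdsLT hx₀'.2] with x hx
  rw [hderiv x hx, abs_neg, abs_of_nonneg (Real.sqrt_nonneg _)]
  rfl

end IsMaxSolOn

/-- A maximal solution attaining an interior maximum lives on a bounded interval, tends to `0`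
at both endpoints, and its slope blows up at both endpoints. -/
theorem stmt5 (s : Set ℝ) (z : ℝ → ℝ) (hz : IsMaxSolOn s z)
    (z0 x0 : ℝ) (hx0 : x0 ∈ s) (hval : z x0 = z0) (hmax : ∀ x ∈ s, z x ≤ z0) :
    ∃ x1 x2 : ℝ, x1 < x2 ∧ s = Ioo x1 x2 ∧
      Tendsto z (nhdsWithin x1 (Ioi x1)) (nhds 0) ∧
      Tendsto z (nhdsWithin x2 (Iio x2)) (nhds 0) ∧
      Tendsto (fun x => |deriv z x|) (nhdsWithin x1 (Ioi x1)) atTop ∧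
      Tendsto (fun x => |deriv z x|) (nhdsWithin x2 (Iio x2)) atTop := by
  have hmax' : IsMaxOn z s x0 := isMaxOn_iff.2 fun x hx => hval ▸ hmax x hx
  have hs := hz.1.eq_Ioo_of_isMaxOn hx0 hmax'
  obtain ⟨hz2, hd2⟩ := hz.tendsto_nhdsLT hs hx0 hmax'
  obtain ⟨hz1, hd1⟩ := hz.comp_neg.tendsto_nhdsLT (by rw [hs, neg_Ioo]) (neg_mem_neg.2 hx0)
    (isMaxOn_iff.2 fun x hx => by simpa using isMaxOn_iff.1 hmax' (-x) hx)
  have hx0' : x0 ∈ Ioo (sInf s) (sSup s) := hs ▸ hx0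
  refine ⟨_, _, hx0'.1.trans hx0'.2, hs, ?_, hz2, ?_, hd2⟩
  · simpa [Function.comp_def] using hz1.comp tendsto_neg_nhdsGT
  · simpa [Function.comp_def, deriv_comp_neg] using hd1.comp tendsto_neg_nhdsGT
end

section
/- There is no solution $u:(\hat{x}, x_*)\to(0,\infty)$ of $\frac{u''}{1+u'^2} = -\frac{2}{u} - \frac{2u'}{u^2}$ with $x_* - \hat{x} < 1$, $u' < 0$ on $(\hat{x}, x_*)$, and $u(x)\to 0$ as $x \to x_*^-$ with $u'$ remaining bounded (i.e., $\lim_{x\to x_*^-} u'(x)$ exists and is finite). -/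
/-!
Along a solution, `F = arctan u' - 2/u` satisfies `F' = -2/u`. If `u` decreases, then
`1/u ≤ 1/u y` on `[x₀, y]`, so `arctan u'(y) ≥ F x₀ + 2 (1 - (y - x₀)) / u y`. Once `y - x₀ < 1`,
the right side tends to `+∞` as `u y → 0⁺`, while `arctan u'(y) < π/2`.
-/

open Set Filter Topology Real

theorem hasDerivAt_arctan_deriv_sub_two_div {u : ℝ → ℝ} {t : ℝ} (hu : DifferentiableAt ℝ u t)
    (hu' : DifferentiableAt ℝ (deriv u) t) (hut : u t ≠ 0)
    (hode : deriv (deriv u) t / (1 + deriv u t ^ 2) = -2 / u t - 2 * deriv u t / u t ^ 2) :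
    HasDerivAt (fun s => arctan (deriv u s) - 2 / u s) (-2 / u t) t := by
  refine (hu'.hasDerivAt.arctan.sub
    ((hasDerivAt_const t (2 : ℝ)).div hu.hasDerivAt hut)).congr_deriv ?_
  rw [one_div_mul_eq_div, hode]
  field_simp
  ring

theorem sub_two_mul_div_le_of_hasDerivAt {F u : ℝ → ℝ} {x y : ℝ} (hxy : x ≤ y)
    (hF : ∀ t ∈ Icc x y, HasDerivAt F (-2 / u t) t) (hu : AntitoneOn u (Icc x y))
    (huy : 0 < u y) : F x - 2 * (y - x) / u y ≤ F y := by
  have hy : y ∈ Icc x y := right_mem_Icc.2 hxy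
  have hslope : ∀ t ∈ interior (Icc x y), -2 / u y ≤ deriv F t := by
    intro t ht
    have ht' := interior_subset ht
    rw [(hF t ht').deriv, neg_div, neg_div, neg_le_neg_iff]
    exact div_le_div_of_nonneg_left zero_le_two huy (hu ht' hy ht'.2)
  have := (convex_Icc x y).mul_sub_le_image_sub_of_le_deriv
    (fun t ht => (hF t ht).continuousAt.continuousWithinAt)
    (fun t ht => (hF t (interior_subset ht)).differentiableAt.differentiableWithinAt)
    hslope x (left_mem_Icc.2 hxy) y hy hxy
  linarith [show -2 / u y * (y - x) = -(2 * (y - x) / u y) by ring]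

theorem tendsto_two_div_atTop {α : Type*} {l : Filter α} {u : α → ℝ}
    (hlim : Tendsto u l (𝓝 0)) (hpos : ∀ᶠ x in l, 0 < u x) :
    Tendsto (fun x => 2 / u x) l atTop := by
  simpa [div_eq_mul_inv] using
    (tendsto_nhdsWithin_iff.2 ⟨hlim, hpos⟩).inv_tendsto_nhdsGT_zero.const_mul_atTop two_pos

theorem stmt10_general (xh xs : ℝ) (hlt : xh < xs) (u : ℝ → ℝ)
    (hpos : ∀ x ∈ Ioo xh xs, 0 < u x)
    (hdiff : ∀ x ∈ Ioo xh xs, DifferentiableAt ℝ u x)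
    (hdiff' : ∀ x ∈ Ioo xh xs, DifferentiableAt ℝ (deriv u) x)
    (hode : ∀ x ∈ Ioo xh xs,
      deriv (deriv u) x / (1 + (deriv u x) ^ 2) = -2 / u x - 2 * deriv u x / (u x) ^ 2)
    (hdec : ∀ x ∈ Ioo xh xs, deriv u x < 0)
    (hlim : Tendsto u (nhdsWithin xs (Iio xs)) (nhds 0)) :
    False := by
  set F : ℝ → ℝ := fun s => arctan (deriv u s) - 2 / u s
  set x₀ := max ((xh + xs) / 2) (xs - 1 / 2)
  have hx₀ : x₀ ∈ Ioo xh xs :=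
    ⟨lt_max_of_lt_left (by linarith), max_lt (by linarith) (by linarith)⟩
  have hanti : StrictAntiOn u (Ioo xh xs) :=
    strictAntiOn_of_deriv_neg (convex_Ioo _ _)
      (fun t ht => (hdiff t ht).continuousAt.continuousWithinAt) (by rwa [interior_Ioo])
  have hF : ∀ t ∈ Ioo xh xs, HasDerivAt F (-2 / u t) t := fun t ht =>
    hasDerivAt_arctan_deriv_sub_two_div (hdiff t ht) (hdiff' t ht) (hpos t ht).ne' (hode t ht)
  have hbound : ∀ y ∈ Ioo x₀ xs, (1 - (y - x₀)) * (2 / u y) + F x₀ < π / 2 := by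
    intro y hy
    have hsub : Icc x₀ y ⊆ Ioo xh xs := Icc_subset_Ioo hx₀.1 hy.2
    have hmvt := sub_two_mul_div_le_of_hasDerivAt hy.1.le (fun t ht => hF t (hsub ht))
      (hanti.antitoneOn.mono hsub) (hpos y (hsub (right_mem_Icc.2 hy.1.le)))
    have harctan : (1 - (y - x₀)) * (2 / u y) + F x₀ ≤ arctan (deriv u y) := by
      simp only [F] at hmvt; linarith [show 2 * (y - x₀) / u y = (y - x₀) * (2 / u y) by ring]
    exact harctan.trans_lt (arctan_lt_pi_div_two _)
  have hnear : ∀ᶠ y in 𝓝[<] xs, y ∈ Ioo x₀ xs := Ioo_mem_nhdsLT hx₀.2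
  have hlarge : Tendsto (fun y => (1 - (y - x₀)) * (2 / u y) + F x₀) (𝓝[<] xs) atTop := by
    refine tendsto_atTop_add_const_right _ _ (Tendsto.pos_mul_atTop (C := 1 - (xs - x₀)) ?_ ?_ ?_)
    · linarith [le_max_right ((xh + xs) / 2) (xs - 1 / 2)]
    · exact ((continuous_const.sub (continuous_id.sub continuous_const)).tendsto xs).mono_left
        nhdsWithin_le_nhds
    · exact tendsto_two_div_atTop hlim (mem_of_superset (Ioo_mem_nhdsLT hlt) hpos)
  obtain ⟨y, hy, hbig⟩ := (hnear.and (hlarge.eventually_ge_atTop (π / 2))).exists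
  exact (hbound y hy).not_ge hbig

/-- A strictly decreasing positive solution of `u''/(1+u'^2) = -2/u - 2u'/u²` on an interval of
length less than `1` cannot reach height zero at the right endpoint with bounded slope. -/
theorem stmt10 (xh xs : ℝ) (hlt : xh < xs) (hlen : xs - xh < 1) (u : ℝ → ℝ)
    (hpos : ∀ x ∈ Ioo xh xs, 0 < u x)
    (hdiff : ∀ x ∈ Ioo xh xs, DifferentiableAt ℝ u x)
    (hdiff' : ∀ x ∈ Ioo xh xs, DifferentiableAt ℝ (deriv u) x)
    (hode : ∀ x ∈ Ioo xh xs,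
      deriv (deriv u) x / (1 + (deriv u x) ^ 2) = -2 / u x - 2 * deriv u x / (u x) ^ 2)
    (hdec : ∀ x ∈ Ioo xh xs, deriv u x < 0)
    (hlim : Tendsto u (nhdsWithin xs (Iio xs)) (nhds 0))
    (L : ℝ) (hslope : Tendsto (deriv u) (nhdsWithin xs (Iio xs)) (nhds L)) :
    False :=
  stmt10_general xh xs hlt u hpos hdiff hdiff' hode hdec hlim
end

section
/- Let $(z(s),\theta(s))$ solve $z'=\sin\theta$, $\theta' = -\frac{2}{z^2}(\sin\theta+z\cos\theta)$ with $z(0)=z_0>0$, $\theta(0)=0$. Then there exists $s_0 > 0$ such that $\theta' < 0$ on $(0,s_0)$, $\theta'(s_0)=0$, and $z(s_0) = -\tan\theta(s_0)$ with $\theta(s_0)\in(-\pi/2,0)$; moreover $\theta' > 0$ for $s > s_0$ as long as $(z,\theta)$ stays in the region $\{0 < z < -\tan\theta,\ \theta\in(-\pi/2,0)\}$. -/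
open Set

/-- The orbit of `z' = sin θ`, `θ' = -(2/z²)(sin θ + z cos θ)` through `(z0, 0)` satisfies
`θ' < 0` until it meets the nullcline `z = -tan θ` at some first instant `s0 > 0` with
`θ(s0) ∈ (-π/2, 0)`, and afterwards `θ' > 0` as long as the orbit stays in the region
`{0 < z < -tan θ, θ ∈ (-π/2, 0)}`. -/
theorem stmt19 (z θ : ℝ → ℝ) (z0 : ℝ) (hz0 : 0 < z0)
    (hz : ∀ s : ℝ, 0 ≤ s → 0 < z s)
    (hz' : ∀ s : ℝ, 0 ≤ s → HasDerivAt z (Real.sin (θ s)) s)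
    (hθ' : ∀ s : ℝ, 0 ≤ s → HasDerivAt θ
      (-(2 / (z s) ^ 2) * (Real.sin (θ s) + z s * Real.cos (θ s))) s)
    (hzinit : z 0 = z0) (hθinit : θ 0 = 0) :
    ∃ s0 : ℝ, 0 < s0 ∧
      (∀ s ∈ Ioo 0 s0, deriv θ s < 0) ∧
      deriv θ s0 = 0 ∧
      z s0 = -Real.tan (θ s0) ∧
      θ s0 ∈ Ioo (-(Real.pi / 2)) 0 ∧
      ∀ s : ℝ, s0 < s → θ s ∈ Ioo (-(Real.pi / 2)) 0 → z s < -Real.tan (θ s) →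
        0 < deriv θ s := by
  set F : ℝ → ℝ := fun s => Real.sin (θ s) + z s * Real.cos (θ s) with hF_def
  have hθc : ContinuousOn θ (Ici 0) := fun s hs => ((hθ' s hs).continuousAt).continuousWithinAt
  have hzc : ContinuousOn z (Ici 0) := fun s hs => ((hz' s hs).continuousAt).continuousWithinAt
  have hFc : ContinuousOn F (Ici 0) :=
    (Real.continuous_sin.comp_continuousOn hθc).add
      (hzc.mul (Real.continuous_cos.comp_continuousOn hθc))
  have hF0 : F 0 = z0 := by simp [hF_def, hθinit, hzinit]
  have hderiv : ∀ s : ℝ, 0 ≤ s → deriv θ s = -(2 / (z s) ^ 2) * F s := by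
    intro s hs
    simpa [hF_def] using (hθ' s hs).deriv
  have hsign : ∀ s : ℝ, 0 ≤ s → 0 < F s → deriv θ s < 0 := by
    intro s hs hF
    rw [hderiv s hs]
    have hzs := (hz s hs).ne'
    have h1 : 0 < 2 / (z s) ^ 2 := by positivity
    exact mul_neg_of_neg_of_pos (neg_lt_zero.mpr h1) hF
  set a := Real.arctan z0 with ha_def
  have ha0 : 0 < a := by rw [ha_def, ← Real.arctan_zero]; exact Real.arctan_strictMono hz0
  have haπ : a < Real.pi / 2 := Real.arctan_lt_pi_div_two z0
  have hcos_a : 0 < Real.cos a := Real.cos_arctan_pos z0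
  have hsina : Real.sin a = z0 * Real.cos a := by
    have h := Real.tan_arctan z0
    rw [Real.tan_eq_sin_div_cos] at h
    field_simp [hcos_a.ne'] at h
    linarith [h]
  have hpi := Real.pi_pos
  -- Key bound: as long as F stays positive up to b (and F b ≥ 0), θ stays above -a
  have keyB : ∀ b : ℝ, 0 < b → (∀ s ∈ Ico (0:ℝ) b, 0 < F s) → 0 ≤ F b →
      ∀ s ∈ Icc (0:ℝ) b, -a < θ s := by
    intro b hb hFpos hFb
    by_contra hcon
    push_neg at hcon
    obtain ⟨t, ht, htle⟩ := hcon
    set E := {u | u ∈ Icc (0:ℝ) b ∧ θ u ≤ -a} with hE_def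
    have hEne : E.Nonempty := ⟨t, ht, htle⟩
    have hEc : IsClosed E := by
      have : E = Icc (0:ℝ) b ∩ θ ⁻¹' (Iic (-a)) := by
        ext u; simp [hE_def, mem_inter_iff, and_comm]
      rw [this]
      exact (hθc.mono (Icc_subset_Ici_self)).preimage_isClosed_of_isClosed isClosed_Icc
        isClosed_Iic
    have hEbdd : BddBelow E := ⟨0, fun x hx => hx.1.1⟩
    set t1 := sInf E with ht1_def
    have ht1E : t1 ∈ E := hEc.csInf_mem hEne hEbdd
    have ht1b : t1 ≤ b := ht1E.1.2
    have ht1pos : 0 < t1 := by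
      rcases ht1E.1.1.lt_or_eq with h | h
      · exact h
      · exfalso
        have := ht1E.2
        rw [← h, hθinit] at this
        linarith
    have hlt : ∀ s, 0 ≤ s → s < t1 → -a < θ s := by
      intro s hs hst
      by_contra h
      push_neg at h
      exact absurd (csInf_le hEbdd ⟨⟨hs, le_trans hst.le ht1b⟩, h⟩) (not_le.mpr hst)
    have hθt1 : θ t1 = -a := by
      have hmem : -a ∈ Icc (θ t1) (θ 0) := ⟨ht1E.2, by rw [hθinit]; linarith⟩
      obtain ⟨t', ht', hθt'⟩ := intermediate_value_Icc' ht1pos.le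
        (hθc.mono Icc_subset_Ici_self) hmem
      have h1 : t1 ≤ t' := csInf_le hEbdd ⟨⟨ht'.1, le_trans ht'.2 ht1b⟩, le_of_eq hθt'⟩
      have h2 : t' = t1 := le_antisymm ht'.2 h1
      rw [← h2, hθt']
    have hθstrict : StrictAntiOn θ (Icc 0 t1) := by
      apply strictAntiOn_of_deriv_neg (convex_Icc _ _) (hθc.mono Icc_subset_Ici_self)
      intro s hs
      rw [interior_Icc] at hs
      exact hsign s hs.1.le (hFpos s ⟨hs.1.le, lt_of_lt_of_le hs.2 ht1b⟩)
    have hθlt0 : ∀ s ∈ Ioo (0:ℝ) t1, θ s < 0 := by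
      intro s hs
      have := hθstrict ⟨le_rfl, ht1pos.le⟩ ⟨hs.1.le, hs.2.le⟩ hs.1
      rwa [hθinit] at this
    have hzstrict : StrictAntiOn z (Icc 0 t1) := by
      apply strictAntiOn_of_deriv_neg (convex_Icc _ _) (hzc.mono Icc_subset_Ici_self)
      intro s hs
      rw [interior_Icc] at hs
      rw [(hz' s hs.1.le).deriv]
      have h1 : -a < θ s := hlt s hs.1.le hs.2
      have h2 : θ s < 0 := hθlt0 s hs
      exact Real.sin_neg_of_neg_of_neg_pi_lt h2 (by linarith)
    have hz1 : z t1 < z0 := by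
      have := hzstrict ⟨le_rfl, ht1pos.le⟩ ⟨ht1pos.le, le_rfl⟩ ht1pos
      rwa [hzinit] at this
    have hFt1 : F t1 < 0 := by
      have heq : F t1 = Real.cos a * (z t1 - z0) := by
        simp only [hF_def, hθt1, Real.sin_neg, Real.cos_neg, hsina]
        ring
      rw [heq]
      exact mul_neg_of_pos_of_neg hcos_a (by linarith)
    rcases lt_or_eq_of_le ht1b with h | h
    · exact absurd (hFpos t1 ⟨ht1pos.le, h⟩) (not_lt.mpr hFt1.le)
    · rw [h] at hFt1; linarith
  -- Existence of a time where F is nonpositive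
  have hexists : ∃ t : ℝ, 0 ≤ t ∧ F t ≤ 0 := by
    by_contra hcon
    push_neg at hcon
    have hθanti : StrictAntiOn θ (Ici 0) := by
      apply strictAntiOn_of_deriv_neg (convex_Ici 0) hθc
      intro s hs
      rw [interior_Ici] at hs
      exact hsign s hs.le (hcon s hs.le)
    have hθbound : ∀ s : ℝ, 0 ≤ s → -a < θ s := by
      intro s hs
      rcases hs.lt_or_eq with h | h
      · exact keyB s h (fun u hu => hcon u hu.1) (hcon s hs).le s ⟨hs, le_rfl⟩
      · rw [← h, hθinit]; linarith
    have hθ1lt : θ 1 < 0 := by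
      have := hθanti self_mem_Ici (by norm_num : (1:ℝ) ∈ Ici 0) one_pos
      rwa [hθinit] at this
    have hθ1a : -a < θ 1 := hθbound 1 zero_le_one
    set c := -Real.sin (θ 1) with hc_def
    have hc : 0 < c := by
      have : Real.sin (θ 1) < 0 := Real.sin_neg_of_neg_of_neg_pi_lt hθ1lt (by linarith)
      simp only [hc_def]; linarith
    have hsinle : ∀ s : ℝ, 1 ≤ s → Real.sin (θ s) ≤ -c := by
      intro s hs
      have h1 : θ s ≤ θ 1 := by
        rcases hs.lt_or_eq with h | h
        · exact (hθanti (by norm_num) (by simp; linarith) h).le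
        · rw [← h]
      have h2 : -a < θ s := hθbound s (by linarith)
      have h3 : Real.sin (θ s) ≤ Real.sin (θ 1) :=
        Real.strictMonoOn_sin.monotoneOn ⟨by linarith, by linarith⟩
          ⟨by linarith, by linarith⟩ h1
      simp only [hc_def]; linarith
    set g : ℝ → ℝ := fun s => z s + c * s with hg_def
    have hganti : AntitoneOn g (Ici 1) := by
      have hdiff : ∀ s ∈ interior (Ici (1:ℝ)), HasDerivAt g (Real.sin (θ s) + c * 1) s := by
        intro s hs
        rw [interior_Ici] at hs
        have hs0 : (0:ℝ) ≤ s := by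
          have := hs.out; linarith
        exact (hz' s hs0).add ((hasDerivAt_id s).const_mul c)
      apply antitoneOn_of_deriv_nonpos (convex_Ici 1)
      · intro s hs
        have hs0 : (0:ℝ) ≤ s := by
          have := hs.out; linarith
        exact (((hz' s hs0).continuousAt).continuousWithinAt).add
          ((continuous_const.mul continuous_id).continuousWithinAt)
      · intro s hs
        exact (hdiff s hs).differentiableAt.differentiableWithinAt
      · intro s hs
        rw [(hdiff s hs).deriv]
        rw [interior_Ici] at hs
        have := hsinle s hs.le
        linarith
    set t := 1 + z 1 / c with ht_def
    have hzt1 : 0 < z 1 := hz 1 zero_le_one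
    have ht1 : 1 ≤ t := by
      have : 0 < z 1 / c := div_pos hzt1 hc
      simp only [ht_def]; linarith
    have hgle : g t ≤ g 1 := hganti self_mem_Ici ht1 ht1
    have hct : c * t = c + z 1 := by
      simp only [ht_def]
      field_simp
    have hzt : z t ≤ 0 := by
      simp only [hg_def] at hgle
      rw [hct] at hgle
      linarith
    exact absurd (hz t (by linarith)) (not_lt.mpr hzt)
  obtain ⟨t, ht0, hFt⟩ := hexists
  -- the first zero of F
  set Z := {u | u ∈ Icc (0:ℝ) t ∧ F u = 0} with hZ_def
  have htpos : 0 < t := by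
    rcases ht0.lt_or_eq with h | h
    · exact h
    · exfalso; rw [← h, hF0] at hFt; linarith
  have hZne : Z.Nonempty := by
    have h0mem : (0:ℝ) ∈ Icc (F t) (F 0) := ⟨hFt, by rw [hF0]; exact hz0.le⟩
    obtain ⟨u, hu, hFu⟩ := intermediate_value_Icc' ht0 (hFc.mono Icc_subset_Ici_self) h0mem
    exact ⟨u, hu, hFu⟩
  have hZc : IsClosed Z := by
    have : Z = Icc (0:ℝ) t ∩ F ⁻¹' {0} := by
      ext u; simp [hZ_def, mem_inter_iff]
    rw [this]
    exact (hFc.mono Icc_subset_Ici_self).preimage_isClosed_of_isClosed isClosed_Icc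
      isClosed_singleton
  have hZbdd : BddBelow Z := ⟨0, fun x hx => hx.1.1⟩
  set s0 := sInf Z with hs0_def
  have hs0Z : s0 ∈ Z := hZc.csInf_mem hZne hZbdd
  have hs0mem : s0 ∈ Icc (0:ℝ) t := hs0Z.1
  have hFs0 : F s0 = 0 := hs0Z.2
  have hs0pos : 0 < s0 := by
    rcases hs0mem.1.lt_or_eq with h | h
    · exact h
    · exfalso; rw [← h, hF0] at hFs0; linarith
  have hFpos : ∀ s ∈ Ico (0:ℝ) s0, 0 < F s := by
    intro s hs
    rcases lt_trichotomy (F s) 0 with h | h | h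
    · exfalso
      have h0mem : (0:ℝ) ∈ Icc (F s) (F 0) := ⟨h.le, by rw [hF0]; exact hz0.le⟩
      obtain ⟨u, hu, hFu⟩ := intermediate_value_Icc' hs.1 (hFc.mono Icc_subset_Ici_self) h0mem
      have : s0 ≤ u := csInf_le hZbdd ⟨⟨hu.1, le_trans hu.2 (le_trans hs.2.le hs0mem.2)⟩, hFu⟩
      linarith [hu.2, hs.2]
    · exfalso
      have : s0 ≤ s := csInf_le hZbdd ⟨⟨hs.1, le_trans hs.2.le hs0mem.2⟩, h⟩
      linarith [hs.2]
    · exact h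
  -- properties of θ at s0
  have hθs0a : -a < θ s0 := keyB s0 hs0pos hFpos (le_of_eq hFs0.symm) s0 ⟨hs0pos.le, le_rfl⟩
  have hθs0lt : θ s0 < 0 := by
    have hstrict : StrictAntiOn θ (Icc 0 s0) := by
      apply strictAntiOn_of_deriv_neg (convex_Icc _ _) (hθc.mono Icc_subset_Ici_self)
      intro s hs
      rw [interior_Icc] at hs
      exact hsign s hs.1.le (hFpos s ⟨hs.1.le, hs.2⟩)
    have := hstrict (left_mem_Icc.mpr hs0pos.le) (right_mem_Icc.mpr hs0pos.le) hs0pos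
    rwa [hθinit] at this
  have hθs0half : -(Real.pi / 2) < θ s0 := by linarith
  have hcosθ : 0 < Real.cos (θ s0) :=
    Real.cos_pos_of_mem_Ioo ⟨hθs0half, by linarith⟩
  refine ⟨s0, hs0pos, ?_, ?_, ?_, ⟨hθs0half, hθs0lt⟩, ?_⟩
  · intro s hs
    exact hsign s hs.1.le (hFpos s ⟨hs.1.le, hs.2⟩)
  · rw [hderiv s0 hs0pos.le, hFs0]; ring
  · have hsin : Real.sin (θ s0) = -(z s0 * Real.cos (θ s0)) := by
      have h := hFs0
      simp only [hF_def] at h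
      linarith
    rw [Real.tan_eq_sin_div_cos, hsin]
    field_simp
  · intro s hs hθm hzs
    have hspos : 0 < s := lt_trans hs0pos hs
    have hzpos := hz s hspos.le
    have hcos : 0 < Real.cos (θ s) := Real.cos_pos_of_mem_Ioo ⟨hθm.1, by linarith [hθm.2]⟩
    have h1 : Real.sin (θ s) = Real.tan (θ s) * Real.cos (θ s) := (Real.tan_mul_cos hcos.ne').symm
    have h2 : Real.tan (θ s) + z s < 0 := by linarith
    have hFneg : F s < 0 := by
      simp only [hF_def]
      rw [h1]
      nlinarith
    rw [hderiv s hspos.le]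
    have h3 : 0 < 2 / (z s) ^ 2 := by positivity
    nlinarith [mul_pos h3 (neg_pos.mpr hFneg)]
end
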